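/- arXiv:1612.02906 — 4 statements merged into one kernel-verified Lean document; each statement's English description precedes it below -/
import Mathlib

section
/- Let p be a prime, n a positive integer, F = GF(p^n), and let q be a positive integer with gcd(q, p^n − 1) = 1. If (α + β)^q = α^q + β^q for all α, β ∈ F, then q is congruent to a power of p modulo p^n − 1, i.e., q ≡ p^l (mod p^n − 1) for some 0 ≤ l < n. -/
/-!
Reduce `q` modulo `p ^ n - 1` to a representative `r` with `1 ≤ r ≤ p ^ n - 1`; then `x ^ q = x ^ r`
on `F`, so `(x + 1) ^ r = x ^ r + 1` for all `x`, and since `r < |F|` this is an identity of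
polynomials. Writing `r = p ^ l * s` with `p ∤ s`, the left side is `(X ^ p ^ l + 1) ^ s`, whose
coefficient of `X ^ p ^ l` is `s ≠ 0`; hence `r = p ^ l`.
-/

open Polynomial

theorem FiniteField.pow_eq_pow_of_modEq {F : Type*} [Field F] [Fintype F] {a b : ℕ}
    (ha : a ≠ 0) (hb : b ≠ 0) (h : a ≡ b [MOD Fintype.card F - 1]) (x : F) : x ^ a = x ^ b := by
  rcases eq_or_ne x 0 with rfl | hx
  · simp [ha, hb]
  · have hx1 := pow_card_sub_one_eq_one x hx
    rw [pow_eq_pow_mod a hx1, pow_eq_pow_mod b hx1, show a % _ = b % _ from h]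

theorem Polynomial.X_add_one_pow_eq_of_forall {R : Type*} [CommRing R] [IsDomain R] [Fintype R]
    {r : ℕ} (hr : r < Fintype.card R) (h : ∀ x : R, (x + 1) ^ r = x ^ r + 1) :
    (X + 1 : R[X]) ^ r = X ^ r + 1 := by
  have hdeg (f : R[X]) (hf : f.natDegree ≤ r) : f.degree < (Finset.univ : Finset R).card :=
    (degree_le_of_natDegree_le hf).trans_lt (by exact_mod_cast hr)
  refine eq_of_degrees_lt_of_eval_finset_eq Finset.univ (hdeg _ (by compute_degree))
    (hdeg _ (by compute_degree)) fun x _ => ?_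
  simpa using h x

theorem Polynomial.exists_eq_pow_of_X_add_one_pow_eq {R : Type*} [CommRing R] (p : ℕ)
    [hp : Fact p.Prime] [CharP R p] {r : ℕ} (hr : r ≠ 0) (h : (X + 1 : R[X]) ^ r = X ^ r + 1) :
    ∃ l, r = p ^ l := by
  obtain ⟨l, s, hps, rfl⟩ := Nat.exists_eq_pow_mul_and_not_dvd hr p hp.out.ne_one
  refine ⟨l, by_contra fun hne => hps ?_⟩
  have hpl : 0 < p ^ l := pow_pos hp.out.pos l
  have hexpand : (X + 1 : R[X]) ^ (p ^ l * s) = expand R (p ^ l) ((X + 1) ^ s) := by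
    rw [pow_mul, add_pow_char_pow, one_pow, map_pow, map_add, expand_X, map_one]
  have hcoeff := congrArg (coeff · (p ^ l)) (hexpand.symm.trans h)
  simp only [coeff_expand hpl, dvd_refl, if_true, Nat.div_self hpl, coeff_X_add_one_pow,
    Nat.choose_one_right, coeff_add, coeff_X_pow, if_neg (Ne.symm hne), coeff_one,
    if_neg hpl.ne', add_zero] at hcoeff
  exact (CharP.cast_eq_zero_iff R p s).mp hcoeff

theorem FiniteField.exists_modEq_pow_char_of_add_pow {F : Type*} [Field F] [Fintype F] (p : ℕ)
    [Fact p.Prime] [CharP F p] {q : ℕ} (hadd : ∀ α β : F, (α + β) ^ q = α ^ q + β ^ q) :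
    ∃ l, p ^ l < Fintype.card F ∧ q ≡ p ^ l [MOD Fintype.card F - 1] := by
  have hq : q ≠ 0 := by
    rintro rfl
    simpa using hadd 0 0
  obtain ⟨r, hr0, hrF, hqr⟩ :
      ∃ r, r ≠ 0 ∧ r < Fintype.card F ∧ q ≡ r [MOD Fintype.card F - 1] := by
    refine ⟨(q - 1) % (Fintype.card F - 1) + 1, by omega, ?_, ?_⟩
    · have := Nat.mod_lt (q - 1) (Nat.sub_pos_of_lt (Fintype.one_lt_card (α := F)))
      omega
    · have := (Nat.mod_modEq (q - 1) (Fintype.card F - 1)).symm.add_right 1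
      rwa [Nat.sub_add_cancel (Nat.one_le_iff_ne_zero.mpr hq)] at this
  have hpoly : (X + 1 : F[X]) ^ r = X ^ r + 1 :=
    X_add_one_pow_eq_of_forall hrF fun x => by
      have hpow := pow_eq_pow_of_modEq hq hr0 hqr
      rw [← hpow, ← hpow, hadd, one_pow]
  obtain ⟨l, hl⟩ := exists_eq_pow_of_X_add_one_pow_eq p hr0 hpoly
  exact ⟨l, hl ▸ hrF, hl ▸ hqr⟩

theorem stmt_1_general (p n : ℕ) (hp : p.Prime)
    (F : Type*) [Field F] [Fintype F] (hF : Fintype.card F = p ^ n)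
    (q : ℕ)
    (hadd : ∀ α β : F, (α + β) ^ q = α ^ q + β ^ q) :
    ∃ l < n, q ≡ p ^ l [MOD p ^ n - 1] := by
  have : Fact p.Prime := ⟨hp⟩
  have : CharP F p := charP_of_card_eq_prime_pow hF
  obtain ⟨l, hlt, hmod⟩ := FiniteField.exists_modEq_pow_char_of_add_pow p hadd
  rw [hF] at hlt hmod
  exact ⟨l, (Nat.pow_lt_pow_iff_right hp.one_lt).mp hlt, hmod⟩

theorem stmt_1 (p n : ℕ) (hp : p.Prime) (hn : 0 < n)
    (F : Type*) [Field F] [Fintype F] (hF : Fintype.card F = p ^ n)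
    (q : ℕ) (hq : 0 < q) (hcop : Nat.Coprime q (p ^ n - 1))
    (hadd : ∀ α β : F, (α + β) ^ q = α ^ q + β ^ q) :
    ∃ l < n, q ≡ p ^ l [MOD p ^ n - 1] :=
  stmt_1_general p n hp F hF q hadd
end

section
/- Let p be a prime, n a positive integer, F = GF(p^n), and let q_i, q_j be positive integers coprime to p^n − 1. Then (α^{q_i} + β^{q_i})^{q_j} = (α^{q_j} + β^{q_j})^{q_i} holds for all α, β ∈ F if and only if q_i ≡ q_j · p^l (mod p^n − 1) for some 0 ≤ l < n. -/
/-! If `qj * r ≡ 1 [MOD p ^ n - 1]`, substituting `α = u ^ r`, `β = v ^ r` and raising both sides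
to the power `r` shows that `x ↦ x ^ (qi * r)` is additive on `F`. It is then a ring endomorphism
of `F`, hence a power `x ↦ x ^ p ^ l` of the Frobenius, and two power maps agree on `F` exactly
when their exponents agree modulo `p ^ n - 1`; this gives `qi ≡ qj * p ^ l`. Conversely,
`qi ≡ qj * p ^ l` reduces the identity to the additivity of `x ↦ x ^ p ^ l`. -/

namespace FiniteField

variable {K : Type*} [Field K] [Fintype K]

theorem pow_eq_pow_iff_modEq_card_sub_one {a b : ℕ} (ha : a ≠ 0) (hb : b ≠ 0) :
    (∀ x : K, x ^ a = x ^ b) ↔ a ≡ b [MOD Fintype.card K - 1] := by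
  classical
  have hcard : Nat.card Kˣ = Fintype.card K - 1 := by
    rw [Nat.card_eq_fintype_card, Fintype.card_units]
  constructor
  · intro h
    obtain ⟨g, hg⟩ := IsCyclic.exists_ofOrder_eq_natCard (α := Kˣ)
    rw [← hcard, ← hg, ← pow_eq_pow_iff_modEq]
    exact Units.ext (by simpa using h g)
  · intro h x
    rcases eq_or_ne x 0 with rfl | hx
    · rw [zero_pow ha, zero_pow hb]
    · lift x to Kˣ using hx.isUnit
      have hdvd : orderOf x ∣ Fintype.card K - 1 := hcard ▸ orderOf_dvd_natCard x
      exact_mod_cast congrArg Units.val (pow_eq_pow_iff_modEq.mpr (h.of_dvd hdvd))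

theorem exists_coe_ringHom_eq_pow_prime_pow {p n : ℕ} [Fact p.Prime] [CharP K p]
    (hK : Fintype.card K = p ^ n) (f : K →+* K) : ∃ l < n, ⇑f = (· ^ p ^ l) := by
  let := ZMod.algebra K p
  have hn : Module.finrank (ZMod p) K = n := by
    have hcard := Module.card_eq_pow_finrank (K := ZMod p) (V := K)
    rw [hK, ZMod.card] at hcard
    exact Nat.pow_right_injective (Fact.out : p.Prime).two_le hcard.symm
  let φ : K →ₐ[ZMod p] K :=
    { f with commutes' := fun r ↦ congrArg (· r) (Subsingleton.elim (f.comp (algebraMap _ K)) _) }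
  obtain ⟨⟨l, hl⟩, hφ⟩ := (bijective_frobeniusAlgHom_pow (ZMod p) K).2 φ
  refine ⟨l, hn ▸ hl, ?_⟩
  have := congrArg DFunLike.coe hφ
  simp only [AlgHom.coe_pow, coe_frobeniusAlgHom, pow_iterate, ZMod.card] at this
  exact this.symm

theorem exists_modEq_prime_pow_of_pow_add {p n k : ℕ} [Fact p.Prime] [CharP K p]
    (hK : Fintype.card K = p ^ n) (hk : k ≠ 0) (hadd : ∀ x y : K, (x + y) ^ k = x ^ k + y ^ k) :
    ∃ l < n, k ≡ p ^ l [MOD p ^ n - 1] := by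
  let f : K →+* K :=
    { powMonoidHom k with map_zero' := zero_pow hk, map_add' := hadd }
  obtain ⟨l, hl, hf⟩ := exists_coe_ringHom_eq_pow_prime_pow hK f
  refine ⟨l, hl, ?_⟩
  rw [← hK, ← pow_eq_pow_iff_modEq_card_sub_one hk (pow_ne_zero l (Fact.out : p.Prime).ne_zero)]
  exact congrFun hf

end FiniteField

theorem stmt_2_general (p n : ℕ) (hp : p.Prime)
    (F : Type*) [Field F] [Fintype F] (hF : Fintype.card F = p ^ n)
    (qi qj : ℕ) (hqi : 0 < qi) (hqj : 0 < qj)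
    (hcj : Nat.Coprime qj (p ^ n - 1)) :
    (∀ α β : F, (α ^ qi + β ^ qi) ^ qj = (α ^ qj + β ^ qj) ^ qi) ↔
      ∃ l < n, qi ≡ qj * p ^ l [MOD p ^ n - 1] := by
  have : Fact p.Prime := ⟨hp⟩
  have : CharP F p := charP_of_card_eq_prime_pow hF
  have hpow {a b : ℕ} (ha : a ≠ 0) (hb : b ≠ 0) (hab : a ≡ b [MOD p ^ n - 1]) (x : F) :
      x ^ a = x ^ b :=
    (FiniteField.pow_eq_pow_iff_modEq_card_sub_one ha hb).mpr (hF ▸ hab) x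
  have hm : 0 < p ^ n - 1 := Nat.sub_pos_of_lt (hF ▸ Fintype.one_lt_card)
  constructor
  · intro h
    obtain ⟨r, hr0, hr⟩ : ∃ r ≠ 0, qj * r ≡ 1 [MOD p ^ n - 1] := by
      refine ⟨qj ^ (Nat.totient (p ^ n - 1) - 1), pow_ne_zero _ hqj.ne', ?_⟩
      rw [← pow_succ', Nat.sub_add_cancel (Nat.totient_pos.mpr hm)]
      exact Nat.ModEq.pow_totient hcj
    have hqjr : qj * r ≠ 0 := mul_ne_zero hqj.ne' hr0
    have hinv (x : F) : x ^ (qj * r) = x := by rw [hpow hqjr one_ne_zero hr, pow_one]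
    have hadd (u v : F) : (u + v) ^ (qi * r) = u ^ (qi * r) + v ^ (qi * r) := by
      have huv := congrArg (· ^ r) (h (u ^ r) (v ^ r))
      simp only [← pow_mul, mul_comm r, hinv] at huv
      exact huv.symm
    obtain ⟨l, hl, hk⟩ :=
      FiniteField.exists_modEq_prime_pow_of_pow_add hF (mul_ne_zero hqi.ne' hr0) hadd
    refine ⟨l, hl, ?_⟩
    calc qi = qi * 1 := (mul_one qi).symm
      _ ≡ qi * (qj * r) [MOD p ^ n - 1] := hr.symm.mul_left qi
      _ = qi * r * qj := by ring
      _ ≡ p ^ l * qj [MOD p ^ n - 1] := hk.mul_right qj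
      _ = qj * p ^ l := mul_comm _ _
  · rintro ⟨l, -, hl⟩ α β
    have hl' : qj * p ^ l ≠ 0 := mul_ne_zero hqj.ne' (pow_ne_zero l hp.ne_zero)
    calc (α ^ qi + β ^ qi) ^ qj = (α ^ (qj * p ^ l) + β ^ (qj * p ^ l)) ^ qj := by
          rw [hpow hqi.ne' hl' hl, hpow hqi.ne' hl' hl]
      _ = ((α ^ qj + β ^ qj) ^ p ^ l) ^ qj := by rw [add_pow_char_pow, pow_mul, pow_mul]
      _ = (α ^ qj + β ^ qj) ^ qi := by rw [← pow_mul, mul_comm, hpow hl' hqi.ne' hl.symm]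

theorem stmt_2 (p n : ℕ) (hp : p.Prime) (hn : 0 < n)
    (F : Type*) [Field F] [Fintype F] (hF : Fintype.card F = p ^ n)
    (qi qj : ℕ) (hqi : 0 < qi) (hqj : 0 < qj)
    (hci : Nat.Coprime qi (p ^ n - 1)) (hcj : Nat.Coprime qj (p ^ n - 1)) :
    (∀ α β : F, (α ^ qi + β ^ qi) ^ qj = (α ^ qj + β ^ qj) ^ qi) ↔
      ∃ l < n, qi ≡ qj * p ^ l [MOD p ^ n - 1] :=
  stmt_2_general p n hp F hF qi qj hqi hqj hcj
end

section
/- Let F = GF(27) and define θ : F^4 → F^4 by θ(x₁,x₂,x₃,x₄) = (x₃, x₄, x₁^9, x₂^9). Then θ is an additive group automorphism of (F^4, +), and for all α ∈ F and all (x₁,x₂,x₃,x₄) ∈ F^4, θ(x₁α, x₂α, x₃α^5, x₄α^5) = (y₁β, y₂β, y₃β^7, y₄β^7), where (y₁,y₂,y₃,y₄) = θ(x₁,x₂,x₃,x₄) and β = α^5. -/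
/-!
`F` has characteristic 3, so `x ↦ x ^ 9` is the ring automorphism `iterateFrobeniusEquiv F 3 2`,
and `θ` is the additive automorphism of `F⁴` that rotates the coordinates by two places and applies
this automorphism to the two coordinates that wrap around. Compatibility with the exponents holds because
`5 * 7 ≡ 9 [MOD 26]` and every `a : F` satisfies `a ^ 27 = a`.
-/

def AddEquiv.rotateTwoWith {M : Type*} [Add M] (e : M ≃+ M) : M × M × M × M ≃+ M × M × M × M where
  toFun x := (x.2.2.1, x.2.2.2, e x.1, e x.2.1)
  invFun y := (e.symm y.2.2.1, e.symm y.2.2.2, y.1, y.2.1)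
  left_inv x := by simp
  right_inv y := by simp
  map_add' x y := by simp

theorem pow_five_pow_seven_of_card_eq_27 {F : Type*} [Field F] [Fintype F]
    (hF : Fintype.card F = 27) (a : F) : (a ^ 5) ^ 7 = a ^ 9 := by
  have h27 : a ^ 27 = a := hF ▸ FiniteField.pow_card a
  calc (a ^ 5) ^ 7 = a ^ 27 * a ^ 8 := by ring
    _ = a ^ 9 := by rw [h27]; ring

theorem stmt_6 (F : Type*) [Field F] [Fintype F] (hF : Fintype.card F = 27)
    (θ : F × F × F × F → F × F × F × F)
    (hθ : ∀ x : F × F × F × F, θ x = (x.2.2.1, x.2.2.2, x.1 ^ 9, x.2.1 ^ 9)) :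
    Function.Bijective θ ∧ (∀ x y : F × F × F × F, θ (x + y) = θ x + θ y) ∧
      ∀ (α x₁ x₂ x₃ x₄ : F),
        θ (x₁ * α, x₂ * α, x₃ * α ^ 5, x₄ * α ^ 5) =
          ((θ (x₁, x₂, x₃, x₄)).1 * α ^ 5,
           (θ (x₁, x₂, x₃, x₄)).2.1 * α ^ 5,
           (θ (x₁, x₂, x₃, x₄)).2.2.1 * (α ^ 5) ^ 7,
           (θ (x₁, x₂, x₃, x₄)).2.2.2 * (α ^ 5) ^ 7) := by
  have : CharP F 3 := charP_of_card_eq_prime_pow (f := 3) hF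
  have hθ_eq : θ = (iterateFrobeniusEquiv F 3 2).toAddEquiv.rotateTwoWith := by
    funext x
    simp [hθ, AddEquiv.rotateTwoWith, iterateFrobeniusEquiv_apply, iterateFrobenius_def]
  refine ⟨hθ_eq ▸ AddEquiv.bijective _, hθ_eq ▸ map_add _, fun α x₁ x₂ x₃ x₄ => ?_⟩
  simp [hθ, mul_pow, pow_five_pow_seven_of_card_eq_27 hF]
end

section
/- Let g, m, N be positive integers with N ≤ m, N ≤ g, and gcd(gcd(m, N), g) = 1. Then N divides the product of binomial coefficients C(g−1, N−1) · C(m−1, N−1). -/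
/-!
Since `n·C(n-1, k-1) = k·C(n, k)`, `N` divides both `g·C(g-1, N-1)` and `m·C(m-1, N-1)`.
Hence for `P` the product of the two binomials, `N` divides `N·P`, `g·P` and `m·P`, and so
their gcd `gcd(m, N, g)·P = P`.
-/

theorem Nat.dvd_mul_choose_pred (n : ℕ) {k : ℕ} (hk : 0 < k) :
    k ∣ n * (n - 1).choose (k - 1) := by
  obtain ⟨k, rfl⟩ := Nat.exists_eq_add_one_of_ne_zero hk.ne'
  rcases n with _ | n
  · simp
  · exact ⟨(n + 1).choose (k + 1), by
      rw [Nat.add_sub_cancel, Nat.add_sub_cancel, Nat.add_one_mul_choose_eq, mul_comm]⟩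

theorem stmt_12_general (g m N : ℕ) (hN : 0 < N)
    (hgcd : Nat.gcd (Nat.gcd m N) g = 1) :
    N ∣ Nat.choose (g - 1) (N - 1) * Nat.choose (m - 1) (N - 1) := by
  set P := Nat.choose (g - 1) (N - 1) * Nat.choose (m - 1) (N - 1)
  have hgP : N ∣ g * P := by
    simpa only [P, mul_assoc] using
      (Nat.dvd_mul_choose_pred g hN).mul_right ((m - 1).choose (N - 1))
  have hmP : N ∣ m * P := by
    simpa only [P, mul_left_comm] using
      (Nat.dvd_mul_choose_pred m hN).mul_left ((g - 1).choose (N - 1))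
  have hNP : N ∣ N * P := dvd_mul_right N P
  simpa [Nat.gcd_mul_right, hgcd] using Nat.dvd_gcd (Nat.dvd_gcd hmP hNP) hgP

theorem stmt_12 (g m N : ℕ) (hg : 0 < g) (hm : 0 < m) (hN : 0 < N)
    (hNm : N ≤ m) (hNg : N ≤ g) (hgcd : Nat.gcd (Nat.gcd m N) g = 1) :
    N ∣ Nat.choose (g - 1) (N - 1) * Nat.choose (m - 1) (N - 1) :=
  stmt_12_general g m N hN hgcd
end
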